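/- For n ≥ 1, the q-Stirling subset number satisfies {n brace 2}_q = (1/2) Σ_{j=1}^{n-1} γ_n / (γ_j γ_{n-j}), and the number of n×n idempotent matrices over F_q equals 2·{n brace 2}_q + 2. -/

import Mathlib

/-- The order of `GL_m(F_q)`. -/
def gma (q m : ℕ) : ℕ := ∏ i ∈ Finset.range m, (q ^ m - q ^ i)

/-- The `q`-Stirling subset number `{n brace 2}_q`: the number of unordered direct sum
decompositions of `F_q^n` into two nonzero subspaces. -/
noncomputable def qStirlingTwo (n : ℕ) (F : Type) [Field F] [Fintype F] : ℕ :=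
  Nat.card {D : Finset (Submodule F (Fin n → F)) //
    D.card = 2 ∧ (∀ V ∈ D, V ≠ ⊥) ∧
    sSupIndep (D : Set (Submodule F (Fin n → F))) ∧
    sSup (D : Set (Submodule F (Fin n → F))) = ⊤}

/-! An idempotent is determined by its range and kernel, so idempotent matrices correspond to
ordered pairs `(U, W)` of complementary subspaces. The pairs `(0, V)` and `(V, 0)` account for
the `+ 2`, and every unordered decomposition arises from exactly two of the remaining pairs.
With `dim U = j`, the space `U` is the span of one of `∏_{i<j} (q^n - q^i)` independent
`j`-tuples, each such `U` being hit `γ_j` times, and the complements of `U` are the graphs of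
the `q^{j(n-j)}` linear maps from a fixed complement into `U`. Since
`γ_n = ∏_{i<j} (q^n - q^i) · q^{j(n-j)} · γ_{n-j}`, there are `γ_n / (γ_j γ_{n-j})` such pairs. -/

open Finset Module Submodule LinearMap

theorem Nat.card_eq_mul_of_card_fiber {α β : Type*} [Finite α] [Finite β] (f : α → β) {k : ℕ}
    (h : ∀ b, Nat.card {a // f a = b} = k) : Nat.card α = k * Nat.card β := by
  have := Fintype.ofFinite β
  rw [← Nat.card_congr (Equiv.sigmaFiberEquiv f), Nat.card_sigma]
  simp [h, Nat.card_eq_fintype_card, mul_comm]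

theorem Nat.card_eq_sum_card_fiber {α β : Type*} [Finite α] (f : α → β)
    (t : Finset β) (hf : ∀ a, f a ∈ t) : Nat.card α = ∑ b ∈ t, Nat.card {a // f a = b} := by
  classical
  have := Fintype.ofFinite α
  simp only [Nat.card_eq_fintype_card, Fintype.card_subtype]
  exact card_eq_sum_card_fiberwise fun a _ => hf a

theorem Nat.card_ordered_eq_two_mul_card_unordered {α : Type*} [Finite α] [DecidableEq α]
    (r : α → α → Prop) (hsymm : ∀ a b, r a b → r b a) (hirr : ∀ a, ¬ r a a) :
    Nat.card {p : α × α // r p.1 p.2} =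
      2 * Nat.card {s : Finset α // ∃ a b, r a b ∧ s = {a, b}} := by
  refine Nat.card_eq_mul_of_card_fiber (fun p => ⟨{p.1.1, p.1.2}, _, _, p.2, rfl⟩) ?_
  rintro ⟨_, a, b, hab, rfl⟩
  have hne : a ≠ b := fun h => hirr a (h ▸ hab)
  calc Nat.card _ = Nat.card ({(a, b), (b, a)} : Set (α × α)) :=
        Nat.card_congr <| (Equiv.subtypeEquivRight fun _ => Subtype.ext_iff).trans <|
          (Equiv.subtypeSubtypeEquivSubtypeInter (fun p : α × α => r p.1 p.2)
            (fun p : α × α => ({p.1, p.2} : Finset α) = {a, b})).trans <|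
              Equiv.subtypeEquivRight ?_
    _ = 2 := by rw [Nat.card_coe_set_eq, Set.ncard_pair (by simp [hne])]
  rintro ⟨x, y⟩
  rw [← Finset.coe_inj]
  push_cast
  rw [Set.pair_eq_pair_iff]
  simp only [Set.mem_insert_iff, Set.mem_singleton_iff, Prod.mk.injEq]
  constructor
  · exact fun h => h.2
  · rintro (⟨rfl, rfl⟩ | ⟨rfl, rfl⟩)
    exacts [⟨hab, .inl ⟨rfl, rfl⟩⟩, ⟨hsymm _ _ hab, .inr ⟨rfl, rfl⟩⟩]

section CompleteLattice

variable {α : Type*} [CompleteLattice α]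

theorem finset_sSupIndep_sSup_eq_top_iff [DecidableEq α] {D : Finset α} :
    (D.card = 2 ∧ (∀ V ∈ D, V ≠ ⊥) ∧ sSupIndep (D : Set α) ∧ sSup (D : Set α) = ⊤) ↔
      ∃ a b, (IsCompl a b ∧ a ≠ ⊥ ∧ b ≠ ⊥) ∧ D = {a, b} := by
  constructor
  · rintro ⟨hcard, hne, hind, hsup⟩
    obtain ⟨a, b, hab, rfl⟩ := Finset.card_eq_two.mp hcard
    push_cast at hind hsup
    rw [sSupIndep_pair hab] at hind
    rw [sSup_pair] at hsup
    exact ⟨a, b, ⟨⟨hind, codisjoint_iff.2 hsup⟩, hne a (by simp), hne b (by simp)⟩, rfl⟩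
  · rintro ⟨a, b, ⟨hc, ha, hb⟩, rfl⟩
    have hab : a ≠ b := by rintro rfl; exact ha (disjoint_self.1 hc.disjoint)
    refine ⟨Finset.card_pair hab, by simp [ha, hb], ?_, ?_⟩ <;> push_cast
    · exact (sSupIndep_pair hab).2 hc.disjoint
    · rw [sSup_pair, hc.sup_eq_top]

theorem two_mul_card_finset_sSupIndep_eq_card_isCompl [Finite α] :
    2 * Nat.card {D : Finset α //
        D.card = 2 ∧ (∀ V ∈ D, V ≠ ⊥) ∧ sSupIndep (D : Set α) ∧ sSup (D : Set α) = ⊤} =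
      Nat.card {p : α × α // IsCompl p.1 p.2 ∧ p.1 ≠ ⊥ ∧ p.2 ≠ ⊥} := by
  classical
  rw [Nat.card_ordered_eq_two_mul_card_unordered (fun a b => IsCompl a b ∧ a ≠ ⊥ ∧ b ≠ ⊥)
    (fun _ _ ⟨hc, ha, hb⟩ => ⟨hc.symm, hb, ha⟩)
    (fun a ⟨hc, ha, _⟩ => ha (disjoint_self.1 hc.disjoint))]
  exact congrArg _ (Nat.card_congr (Equiv.subtypeEquivRight
    fun _ => finset_sSupIndep_sSup_eq_top_iff))

theorem card_isCompl_eq_add_two [Finite α] (h : (⊥ : α) ≠ ⊤) :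
    Nat.card {p : α × α // IsCompl p.1 p.2} =
      Nat.card {p : α × α // IsCompl p.1 p.2 ∧ p.1 ≠ ⊥ ∧ p.2 ≠ ⊥} + 2 := by
  have hsplit : {p : α × α | IsCompl p.1 p.2} =
      {p | IsCompl p.1 p.2 ∧ p.1 ≠ ⊥ ∧ p.2 ≠ ⊥} ∪ {(⊥, ⊤), (⊤, ⊥)} := by
    ext ⟨a, b⟩
    simp only [Set.mem_ofPred_eq, Set.mem_union, Set.mem_insert_iff, Set.mem_singleton_iff,
      Prod.mk.injEq]
    constructor
    · intro hc
      by_cases ha : a = ⊥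
      · exact .inr (.inl ⟨ha, eq_top_of_bot_isCompl (ha ▸ hc)⟩)
      by_cases hb : b = ⊥
      · exact .inr (.inr ⟨eq_top_of_isCompl_bot (hb ▸ hc), hb⟩)
      exact .inl ⟨hc, ha, hb⟩
    · rintro (⟨hc, -⟩ | ⟨rfl, rfl⟩ | ⟨rfl, rfl⟩)
      exacts [hc, isCompl_bot_top, isCompl_top_bot]
  have hdisj :
      Disjoint {p : α × α | IsCompl p.1 p.2 ∧ p.1 ≠ ⊥ ∧ p.2 ≠ ⊥} {(⊥, ⊤), (⊤, ⊥)} := by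
    rw [Set.disjoint_right]
    rintro _ (rfl | rfl) ⟨-, h1, h2⟩
    exacts [h1 rfl, h2 rfl]
  rw [← Set.coe_ofPred, ← Set.coe_ofPred, Nat.card_coe_set_eq, Nat.card_coe_set_eq, hsplit,
    Set.ncard_union_eq hdisj, Set.ncard_pair (by simp [h])]

end CompleteLattice

noncomputable def Submodule.isIdempotentElemEquivIsCompl (R E : Type*) [Ring R]
    [AddCommGroup E] [Module R E] :
    {f : Module.End R E // IsIdempotentElem f} ≃
      {p : Submodule R E × Submodule R E // IsCompl p.1 p.2} where
  toFun f := ⟨(range f.1, ker f.1), f.2.isCompl⟩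
  invFun p := ⟨p.1.1.projection p.1.2 p.2, isIdempotentElem_projection p.2⟩
  left_inv f := Subtype.ext f.2.eq_projection.symm
  right_inv p := Subtype.ext (Prod.ext (range_projection p.2) (ker_projection p.2))

theorem Matrix.card_idempotent_eq_card_isCompl (ι R : Type*) [Fintype ι] [DecidableEq ι]
    [CommRing R] :
    Nat.card {P : Matrix ι ι R // P * P = P} =
      Nat.card {p : Submodule R (ι → R) × Submodule R (ι → R) // IsCompl p.1 p.2} := by
  let e := Matrix.toLinAlgEquiv' (R := R) (n := ι)
  refine Nat.card_congr <| (Equiv.subtypeEquiv e.toEquiv fun P => ?_).trans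
    (isIdempotentElemEquivIsCompl R (ι → R))
  exact ⟨fun h => IsIdempotentElem.map (e := P) h e,
    fun h => (by simpa using h.map e.symm : IsIdempotentElem P)⟩

noncomputable def Submodule.retractionEquivOfIsCompl {R E : Type*} [Ring R] [AddCommGroup E]
    [Module R E] {p q : Submodule R E} (h : IsCompl p q) :
    {f : E →ₗ[R] p // ∀ x : p, f x = x} ≃ (q →ₗ[R] p) where
  toFun f := f.1 ∘ₗ q.subtype
  invFun φ := ⟨ofIsCompl h LinearMap.id φ, fun x => ofIsCompl_apply_left h x⟩
  left_inv f := Subtype.ext (ofIsCompl_eq h (fun u => (f.2 u).symm) fun _ => rfl)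
  right_inv _ := LinearMap.ext fun w => ofIsCompl_apply_right h w

theorem gma_add (q a b : ℕ) :
    gma q (a + b) = (∏ i ∈ range a, (q ^ (a + b) - q ^ i)) * q ^ (a * b) * gma q b := by
  have h : ∀ i, q ^ (a + b) - q ^ (a + i) = q ^ a * (q ^ b - q ^ i) := fun i => by
    rw [Nat.mul_sub, ← pow_add, ← pow_add]
  rw [gma, prod_range_add, mul_assoc]
  simp_rw [h]
  rw [prod_mul_distrib, prod_const, card_range, ← pow_mul, gma]

theorem gma_pos {q : ℕ} (hq : 1 < q) (m : ℕ) : 0 < gma q m :=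
  prod_pos fun _ hi => Nat.sub_pos_of_lt (Nat.pow_lt_pow_right hq (mem_range.mp hi))

section FiniteDimensional

variable {K V : Type*} [Field K] [AddCommGroup V] [Module K V] [FiniteDimensional K V]

noncomputable def Submodule.linearIndependentSpanEqEquiv {j : ℕ} (U : Submodule K V)
    (hU : finrank K U = j) :
    {s : {s : Fin j → V // LinearIndependent K s} // span K (Set.range s.1) = U} ≃
      {t : Fin j → U // LinearIndependent K t} where
  toFun s := ⟨fun i => ⟨s.1.1 i, s.2.le (subset_span ⟨i, rfl⟩)⟩, s.1.2.of_comp U.subtype⟩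
  invFun t := ⟨⟨U.subtype ∘ t.1, t.2.map' _ (ker_subtype _)⟩, by
    refine eq_of_le_of_finrank_eq (span_le.2 ?_) ?_
    · rintro _ ⟨i, rfl⟩
      exact (t.1 i).2
    · rw [finrank_span_eq_card (t.2.map' _ (ker_subtype _)), Fintype.card_fin, hU]⟩
  left_inv _ := rfl
  right_inv _ := rfl

end FiniteDimensional

section FiniteModule

variable {K V : Type*} [Field K] [AddCommGroup V] [Module K V] [Finite V]

local notation "n" => finrank K V

theorem card_isCompl_ne_bot_eq_sum :
    Nat.card {p : Submodule K V × Submodule K V // IsCompl p.1 p.2 ∧ p.1 ≠ ⊥ ∧ p.2 ≠ ⊥} =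
      ∑ j ∈ Icc 1 (n - 1),
        Nat.card {p : Submodule K V × Submodule K V // IsCompl p.1 p.2 ∧ finrank K p.1 = j} := by
  have hsum {U W : Submodule K V} (h : IsCompl U W) : finrank K U + finrank K W = n :=
    finrank_add_eq_of_isCompl h
  rw [Nat.card_eq_sum_card_fiber (fun p => finrank K p.1.1) (Icc 1 (n - 1)) ?_]
  · refine sum_congr rfl fun j hj => Nat.card_congr <|
      (Equiv.subtypeSubtypeEquivSubtypeInter _ fun p : Submodule K V × Submodule K V =>
        finrank K p.1 = j).trans <|
        Equiv.subtypeEquivRight fun p => ?_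
    rw [mem_Icc] at hj
    refine ⟨fun ⟨⟨hc, _⟩, hj⟩ => ⟨hc, hj⟩, fun ⟨hc, hj'⟩ => ⟨⟨hc, ?_, ?_⟩, hj'⟩⟩
    · rw [← one_le_finrank_iff]; omega
    · rw [← one_le_finrank_iff]; have := hsum hc; omega
  · rintro ⟨p, hc, h1, h2⟩
    rw [← one_le_finrank_iff] at h1 h2
    have := hsum hc
    simp only [mem_Icc]
    omega

variable [Fintype K]

local notation "q" => Fintype.card K

theorem card_finrank_eq_mul_gma {j : ℕ} (hj : j ≤ n) :
    Nat.card {U : Submodule K V // finrank K U = j} * gma q j =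
      ∏ i ∈ range j, (q ^ n - q ^ i) := by
  rw [← Fin.prod_univ_eq_prod_range (fun i => q ^ n - q ^ i), ← card_linearIndependent hj,
    mul_comm]
  refine (Nat.card_eq_mul_of_card_fiber (fun s => ⟨span K (Set.range s.1), by
    rw [finrank_span_eq_card s.2, Fintype.card_fin]⟩) ?_).symm
  rintro ⟨U, hU⟩
  have : Nat.card {t : Fin j → U // LinearIndependent K t} = gma q j := by
    rw [card_linearIndependent hU.ge, hU, gma]
    exact Fin.prod_univ_eq_prod_range (fun i => q ^ j - q ^ i) j
  rw [← this]
  exact Nat.card_congr <| (Equiv.subtypeEquivRight fun _ => Subtype.ext_iff).trans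
    (U.linearIndependentSpanEqEquiv hU)

theorem card_isCompl (U : Submodule K V) :
    Nat.card {W : Submodule K V // IsCompl U W} = q ^ (finrank K U * (n - finrank K U)) := by
  obtain ⟨W, h⟩ := U.exists_isCompl
  rw [Nat.card_congr (U.isComplEquivProj.trans (retractionEquivOfIsCompl h)),
    natCard_eq_pow_finrank (K := K), finrank_linearMap, Nat.card_eq_fintype_card, mul_comm,
    ← finrank_add_eq_of_isCompl h, Nat.add_sub_cancel_left]

theorem card_isCompl_finrank_eq {j : ℕ} :
    Nat.card {p : Submodule K V × Submodule K V // IsCompl p.1 p.2 ∧ finrank K p.1 = j} =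
      Nat.card {U : Submodule K V // finrank K U = j} * q ^ (j * (n - j)) := by
  let e : {p : Submodule K V × Submodule K V // IsCompl p.1 p.2 ∧ finrank K p.1 = j} ≃
      (U : {U : Submodule K V // finrank K U = j}) × {W : Submodule K V // IsCompl U.1 W} :=
    ⟨fun p => ⟨⟨p.1.1, p.2.2⟩, p.1.2, p.2.1⟩, fun x => ⟨(x.1.1, x.2.1), x.2.2, x.1.2⟩,
      fun _ => rfl, fun _ => rfl⟩
  have : Fintype {U : Submodule K V // finrank K U = j} := Fintype.ofFinite _
  rw [Nat.card_congr e, Nat.card_sigma, sum_const_nat fun U _ => by rw [card_isCompl, U.2],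
    card_univ, Nat.card_eq_fintype_card]

theorem card_isCompl_finrank_mul_gma {j : ℕ} (hj : j ≤ n) :
    Nat.card {p : Submodule K V × Submodule K V // IsCompl p.1 p.2 ∧ finrank K p.1 = j} *
      (gma q j * gma q (n - j)) = gma q n := by
  have hsplit := gma_add q j (n - j)
  rw [Nat.add_sub_cancel' hj, ← card_finrank_eq_mul_gma hj] at hsplit
  rw [card_isCompl_finrank_eq, hsplit]
  ring

theorem card_isCompl_finrank_eq_div {j : ℕ} (hj : j ≤ n) :
    (Nat.card {p : Submodule K V × Submodule K V // IsCompl p.1 p.2 ∧ finrank K p.1 = j} : ℚ) =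
      gma q n / (gma q j * gma q (n - j)) := by
  have hq : 1 < q := Fintype.one_lt_card
  have := gma_pos hq j
  have := gma_pos hq (n - j)
  rw [eq_div_iff (by positivity)]
  exact_mod_cast card_isCompl_finrank_mul_gma hj

end FiniteModule

/-- `{n brace 2}_q = (1/2) Σ_{j=1}^{n-1} γ_n/(γ_j γ_{n-j})`, and the number of `n × n`
idempotent matrices over `F_q` equals `2 {n brace 2}_q + 2`. -/
theorem qStirlingTwo_and_projections (q n : ℕ) (hn : 1 ≤ n)
    (F : Type) [Field F] [Fintype F] (hF : Fintype.card F = q) :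
    (qStirlingTwo n F : ℚ) =
      (1 / 2 : ℚ) * ∑ j ∈ Finset.Icc 1 (n - 1), (gma q n : ℚ) / (gma q j * gma q (n - j)) ∧
    Nat.card {P : Matrix (Fin n) (Fin n) F // P * P = P} =
      2 * qStirlingTwo n F + 2 := by
  subst hF
  have hdim : finrank F (Fin n → F) = n := finrank_fin_fun F
  have hpairs : 2 * qStirlingTwo n F = ∑ j ∈ Icc 1 (n - 1), Nat.card
      {p : Submodule F (Fin n → F) × Submodule F (Fin n → F) //
        IsCompl p.1 p.2 ∧ finrank F p.1 = j} := by
    rw [qStirlingTwo, two_mul_card_finset_sSupIndep_eq_card_isCompl, card_isCompl_ne_bot_eq_sum,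
      hdim]
  refine ⟨?_, ?_⟩
  · have hterm (j : ℕ) (hj : j ∈ Icc 1 (n - 1)) :
        (gma (Fintype.card F) n : ℚ) / (gma (Fintype.card F) j * gma (Fintype.card F) (n - j)) =
          Nat.card {p : Submodule F (Fin n → F) × Submodule F (Fin n → F) //
            IsCompl p.1 p.2 ∧ finrank F p.1 = j} := by
      have h := card_isCompl_finrank_eq_div (K := F) (V := Fin n → F) (j := j)
        (by rw [hdim]; grind)
      rw [hdim] at h
      exact h.symm
    rw [sum_congr rfl hterm, ← Nat.cast_sum, ← hpairs]
    push_cast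
    ring
  · have : NeZero n := ⟨by omega⟩
    rw [Matrix.card_idempotent_eq_card_isCompl, card_isCompl_eq_add_two bot_ne_top,
      ← two_mul_card_finset_sSupIndep_eq_card_isCompl, qStirlingTwo]
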